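/- arXiv:2408.01268 — 3 statements merged into one kernel-verified Lean document; each statement's English description precedes it below -/
import Mathlib

section
/- Let r and b be real numbers with 0 < r < 1 and b > 1. Then the series ∑_{n=0}^∞ r^(b^n) converges and satisfies ∑_{n=0}^∞ r^(b^n) ≤ r / (1 − r^(b−1)). -/
open Real

/-- Doubly Exponential Bound: for `0 < r < 1` and `b > 1`, the series
`∑_{n=0}^∞ r^(b^n)` converges and is at most `r / (1 - r^(b-1))`.
All powers are real powers (`rpow`). -/
theorem doubly_exponential_bound (r b : ℝ) (hr0 : 0 < r) (hr1 : r < 1) (hb : 1 < b) :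
    Summable (fun n : ℕ => r ^ (b ^ (n : ℕ))) ∧
      (∑' n : ℕ, r ^ (b ^ (n : ℕ))) ≤ r / (1 - r ^ (b - 1)) := by
  set q : ℝ := r ^ (b - 1) with hq
  have hq0 : 0 < q := rpow_pos_of_pos hr0 _
  have hq1 : q < 1 := rpow_lt_one hr0.le hr1 (by linarith)
  -- key bound: r ^ (b ^ n) ≤ r * q ^ n
  have key : ∀ n : ℕ, r ^ (b ^ (n : ℕ)) ≤ r * q ^ n := by
    intro n
    have hbern : 1 + n * (b - 1) ≤ b ^ n := by
      have := one_add_mul_le_pow (a := b - 1) (by linarith) n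
      simpa using this
    have h1 : r ^ (b ^ (n : ℕ)) ≤ r ^ (1 + n * (b - 1)) :=
      rpow_le_rpow_of_exponent_ge hr0 hr1.le hbern
    calc r ^ (b ^ (n : ℕ)) ≤ r ^ (1 + n * (b - 1)) := h1
      _ = r * q ^ n := by
          rw [rpow_add hr0, rpow_one, mul_comm (n : ℝ), rpow_mul hr0.le, ← hq,
            rpow_natCast]
  have hgs : Summable (fun n : ℕ => r * q ^ n) :=
    (summable_geometric_of_lt_one hq0.le hq1).mul_left r
  have hsum : Summable (fun n : ℕ => r ^ (b ^ (n : ℕ))) :=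
    Summable.of_nonneg_of_le (fun n => (rpow_pos_of_pos hr0 _).le) key hgs
  refine ⟨hsum, ?_⟩
  calc (∑' n : ℕ, r ^ (b ^ (n : ℕ))) ≤ ∑' n : ℕ, r * q ^ n :=
        Summable.tsum_le_tsum key hsum hgs
    _ = r * (1 - q)⁻¹ := by rw [tsum_mul_left, tsum_geometric_of_lt_one hq0.le hq1]
    _ = r / (1 - q) := by rw [div_eq_mul_inv]
end

section
/- Let τ ≥ 2 be a real number. Then the sequence f is strictly decreasing, and for every n ∈ ℕ one has f n > (τ + √(τ² − 4))/2 ≥ 1; in particular every term of the sequence is at least 1. -/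
open Real

/-- The sequence `f 0 = τ`, `f (n+1) = τ - 1 / f n` from the paper's recursion
`f^{(2)}(τ) = τ`, `f^{(k+1)}(τ) = τ - 1/f^{(k)}(τ)`. -/
noncomputable def fseq (τ : ℝ) : ℕ → ℝ
  | 0 => τ
  | n + 1 => τ - 1 / fseq τ n

/-- For `τ ≥ 2`, the sequence `f` is strictly decreasing, every term is strictly
larger than `(τ + √(τ² - 4))/2`, and this lower bound is at least `1`. -/
theorem fseq_strictAnti_and_bounds (τ : ℝ) (hτ : 2 ≤ τ) :
    StrictAnti (fseq τ) ∧
      (∀ n : ℕ, fseq τ n > (τ + Real.sqrt (τ ^ 2 - 4)) / 2) ∧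
      (τ + Real.sqrt (τ ^ 2 - 4)) / 2 ≥ 1 := by
  set s := Real.sqrt (τ ^ 2 - 4) with hsdef
  have hs0 : 0 ≤ s := Real.sqrt_nonneg _
  have hs2 : s ^ 2 = τ ^ 2 - 4 := Real.sq_sqrt (by nlinarith)
  set L := (τ + s) / 2 with hLdef
  have hL1 : (1 : ℝ) ≤ L := by simp only [hLdef]; linarith
  have hL0 : 0 < L := by linarith
  have hLeq : L * L - τ * L + 1 = 0 := by
    simp only [hLdef]; nlinarith [hs2]
  have hslt : s < τ := by
    nlinarith [hs2, hs0]
  have hbound : ∀ n, L < fseq τ n := by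
    intro n
    induction n with
    | zero => simp only [fseq, hLdef]; linarith
    | succ n ih =>
      have hfn : 0 < fseq τ n := lt_trans hL0 ih
      have h1 : 1 / fseq τ n < 1 / L := by
        apply one_div_lt_one_div_of_lt hL0 ih
      have hτL : τ - 1 / L = L := by
        field_simp
        nlinarith [hLeq]
      show L < τ - 1 / fseq τ n
      linarith
  have hanti : StrictAnti (fseq τ) := by
    apply strictAnti_nat_of_succ_lt
    intro n
    have hb := hbound n
    have hfn : 0 < fseq τ n := lt_trans hL0 hb
    show τ - 1 / fseq τ n < fseq τ n
    have hm : fseq τ n * (1 / fseq τ n) = 1 := by field_simp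
    nlinarith [hb, hLeq, hL1, hm]
  exact ⟨hanti, hbound, hL1⟩
end

section
/- Let τ be a real number with 2 < τ < 5/2. Then there exist a natural number n and a real β > 0 such that (1 + β)(τ − 2) < 1/(τ − 1/(f n)). -/
open Real

/-!
For `τ ≥ 2` the sequence `fseq τ` stays above `1` and decreases, so it converges to a fixed
point `L = τ - 1/L` with `L ≥ 1`. Then `L (τ - 2) = (L - 1)²`, and `τ < 5/2` forces `L < 2`,
so `L < 1/(τ - 2)`. Hence `fseq τ (n + 1) = τ - 1 / fseq τ n < 1/(τ - 2)` for some `n`, and the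
strict inequality leaves room for a factor `1 + β`.
-/

open Filter Topology

theorem fseq_succ (τ : ℝ) (n : ℕ) : fseq τ (n + 1) = τ - 1 / fseq τ n := rfl

theorem one_lt_fseq {τ : ℝ} (hτ : 2 ≤ τ) (n : ℕ) : 1 < fseq τ n := by
  induction n with
  | zero => simp only [fseq]; linarith
  | succ n ih =>
    have : 1 / fseq τ n < 1 := (div_lt_one (by linarith)).2 ih
    rw [fseq_succ]
    linarith

theorem fseq_antitone {τ : ℝ} (hτ : 2 ≤ τ) : Antitone (fseq τ) := by
  refine antitone_nat_of_succ_le fun n => ?_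
  induction n with
  | zero =>
    have : 0 < 1 / τ := by positivity
    simp only [fseq]
    linarith
  | succ n ih =>
    show τ - 1 / fseq τ (n + 1) ≤ τ - 1 / fseq τ n
    have := one_div_le_one_div_of_le (by linarith [one_lt_fseq hτ (n + 1)]) ih
    linarith

theorem exists_tendsto_fseq {τ : ℝ} (hτ : 2 ≤ τ) :
    ∃ L, 1 ≤ L ∧ L = τ - 1 / L ∧ Tendsto (fseq τ) atTop (𝓝 L) := by
  have hbdd : BddBelow (Set.range (fseq τ)) :=
    ⟨1, Set.forall_mem_range.2 fun n => (one_lt_fseq hτ n).le⟩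
  have hlim := tendsto_atTop_ciInf (fseq_antitone hτ) hbdd
  set L := ⨅ n, fseq τ n
  have hL : 1 ≤ L := le_ciInf fun n => (one_lt_fseq hτ n).le
  have hstep : Tendsto (fun n => τ - 1 / fseq τ n) atTop (𝓝 (τ - 1 / L)) :=
    tendsto_const_nhds.sub (tendsto_const_nhds.div hlim (by linarith))
  exact ⟨L, hL, tendsto_nhds_unique ((tendsto_add_atTop_iff_nat 1).2 hlim) hstep, hlim⟩

theorem lt_one_div_sub_two_of_eq_sub_one_div {τ L : ℝ} (hτ : 2 < τ) (hτ' : τ < 5 / 2)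
    (hL : 1 ≤ L) (hfix : L = τ - 1 / L) : L < 1 / (τ - 2) := by
  have hLτ : L * τ = L ^ 2 + 1 := by
    rw [show τ = L + 1 / L by linarith]
    field_simp
  have hL2 : L < 2 := by nlinarith
  rw [lt_div_iff₀ (by linarith)]
  nlinarith

theorem exists_pos_one_add_mul_lt {c d : ℝ} (hc : 0 < c) (hcd : c < d) :
    ∃ β : ℝ, 0 < β ∧ (1 + β) * c < d := by
  refine ⟨(d - c) / (2 * c), by positivity, ?_⟩
  field_simp
  linarith

/-- For `2 < τ < 5/2`, there exist a natural number `n` and a real `β > 0` such that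
`(1 + β)(τ - 2) < 1 / (τ - 1 / f n)`: satisfiability of the hypothesis of the paper's
weight-increasing-path theorem in the regime `τ < 5/2`. -/
theorem exists_step_parameters (τ : ℝ) (hτ2 : 2 < τ) (hτ52 : τ < 5 / 2) :
    ∃ (n : ℕ) (β : ℝ), 0 < β ∧ (1 + β) * (τ - 2) < 1 / (τ - 1 / fseq τ n) := by
  obtain ⟨L, hL, hfix, hlim⟩ := exists_tendsto_fseq hτ2.le
  have hL_lt := lt_one_div_sub_two_of_eq_sub_one_div hτ2 hτ52 hL hfix
  obtain ⟨n, hn⟩ := ((hlim.comp (tendsto_add_atTop_nat 1)).eventually_lt_const hL_lt).exists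
  have hpos : 0 < τ - 1 / fseq τ n := by linarith [one_lt_fseq hτ2.le (n + 1), fseq_succ τ n]
  have hgap : τ - 2 < 1 / (τ - 1 / fseq τ n) := (lt_one_div (by linarith) hpos).2 hn
  obtain ⟨β, hβ, h⟩ := exists_pos_one_add_mul_lt (by linarith) hgap
  exact ⟨n, β, hβ, h⟩
end
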